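/- Let α ∈ ℝ^d with 2ρᵀσα + |σα|² = -ρᵀρ (equivalently α = -σ⁻¹ρ). Then applying the policy improvement scheme to the Gaussian policy π₁ with mean -σ⁻¹ρ(x-w) and value function V^{π₁}(t,x) = (x-w)²e^{-ρᵀρ(T-t)} + F₁(t) yields the policy with mean -σ⁻¹ρ(x-w) and covariance (σᵀσ)⁻¹(λ/2)e^{ρᵀρ(T-t)}; i.e., the optimal Gaussian policy is a fixed point of the improvement map π ↦ N(-σ⁻¹ρ V_x/V_{xx}, (σᵀσ)⁻¹λ/V_{xx}). -/

import Mathlib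

open Matrix Real

/-- The multivariate Gaussian density `N(u | β, S)` on `ℝ^d`. -/
noncomputable def gaussianDensityFn {d : ℕ} (β : Fin d → ℝ)
    (S : Matrix (Fin d) (Fin d) ℝ) (u : Fin d → ℝ) : ℝ :=
  ((2 * Real.pi) ^ d * S.det) ^ (-(1:ℝ)/2) *
    Real.exp (-(1/2) * ((u - β) ⬝ᵥ (S⁻¹ *ᵥ (u - β))))

theorem deriv_sub_sq_mul_add (w c f : ℝ) :
    deriv (fun y : ℝ => (y - w) ^ 2 * c + f) = fun y => 2 * (y - w) * c := by
  funext y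
  exact ((((hasDerivAt_id y).sub_const w).pow 2).mul_const c |>.add_const f).deriv.trans
    (by simp)

theorem deriv_two_mul_sub_mul (w c : ℝ) :
    deriv (fun y : ℝ => 2 * (y - w) * c) = fun _ => 2 * c := by
  funext y
  exact ((((hasDerivAt_id y).sub_const w).const_mul 2).mul_const c).deriv.trans (by simp)

theorem stmt13_general {d : ℕ} (T lam w : ℝ)
    (ρ : Fin d → ℝ) (σ : Matrix (Fin d) (Fin d) ℝ)
    (F₁ : ℝ → ℝ) (V : ℝ → ℝ → ℝ)
    (hV : ∀ t x : ℝ, V t x = (x - w)^2 * Real.exp (-(ρ ⬝ᵥ ρ) * (T - t)) + F₁ t) :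
    ∀ t x : ℝ,
      gaussianDensityFn
          ((-(deriv (fun y => V t y) x / deriv (fun y => deriv (fun y' => V t y') y) x))
            • (σ⁻¹ *ᵥ ρ))
          ((lam / deriv (fun y => deriv (fun y' => V t y') y) x) • (σᵀ * σ)⁻¹) =
        gaussianDensityFn ((-(x - w)) • (σ⁻¹ *ᵥ ρ))
          ((lam / 2 * Real.exp ((ρ ⬝ᵥ ρ) * (T - t))) • (σᵀ * σ)⁻¹) := by
  intro t x
  set c := Real.exp (-(ρ ⬝ᵥ ρ) * (T - t)) with hc
  have hVt : (fun y => V t y) = fun y => (y - w) ^ 2 * c + F₁ t := funext (hV t)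
  have hc_ne : c ≠ 0 := (Real.exp_pos _).ne'
  have hc_inv : Real.exp ((ρ ⬝ᵥ ρ) * (T - t)) = c⁻¹ := by
    rw [hc, ← Real.exp_neg]; ring_nf
  simp only [hVt, deriv_sub_sq_mul_add, deriv_two_mul_sub_mul, hc_inv]
  congr 2 <;> field_simp

/-- The optimal Gaussian policy is a fixed point of the policy improvement map
`π ↦ N(-σ⁻¹ρ V_x/V_{xx}, (σᵀσ)⁻¹ λ/V_{xx})`: applying the improvement scheme to a
Gaussian policy with value function `V(t,x) = (x-w)²e^{-ρᵀρ(T-t)} + F₁(t)` yields the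
policy with mean `-σ⁻¹ρ(x-w)` and covariance `(σᵀσ)⁻¹(λ/2)e^{ρᵀρ(T-t)}`. -/
theorem stmt13 {d : ℕ} (T lam w : ℝ) (hT : 0 < T) (hlam : 0 < lam)
    (ρ : Fin d → ℝ) (σ : Matrix (Fin d) (Fin d) ℝ) (hσ : IsUnit σ.det)
    (α : Fin d → ℝ) (hα : α = -(σ⁻¹ *ᵥ ρ))
    (F₁ : ℝ → ℝ) (V : ℝ → ℝ → ℝ)
    (hV : ∀ t x : ℝ, V t x = (x - w)^2 * Real.exp (-(ρ ⬝ᵥ ρ) * (T - t)) + F₁ t) :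
    ∀ t x : ℝ,
      gaussianDensityFn
          ((-(deriv (fun y => V t y) x / deriv (fun y => deriv (fun y' => V t y') y) x))
            • (σ⁻¹ *ᵥ ρ))
          ((lam / deriv (fun y => deriv (fun y' => V t y') y) x) • (σᵀ * σ)⁻¹) =
        gaussianDensityFn ((-(x - w)) • (σ⁻¹ *ᵥ ρ))
          ((lam / 2 * Real.exp ((ρ ⬝ᵥ ρ) * (T - t))) • (σᵀ * σ)⁻¹) :=
  stmt13_general T lam w ρ σ F₁ V hV
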